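/- arXiv:1503.08816 — 3 statements merged into one kernel-verified Lean document; each statement's English description precedes it below -/
import Mathlib

section
/- Let q ≥ 2 and -q < d ≤ 0 with d ≠ 0 and d ≠ -q+1. Then every integer x has a representation x = Σ_{i=0}^{ℓ} x_i q^i with digits x_i ∈ {d, …, q+d-1}. -/
/-!
Divide `x - d` by `q` with remainder: `x = r + q * y` with a digit `r ∈ {d, …, q + d - 1}`.
Since `-q + 2 ≤ d ≤ -1`, every digit satisfies `|r| ≤ q - 2`, so `q |y| ≤ |x| + q - 2`, which forces
`|y| < |x|` as soon as `x ≠ 0`. Recursing on `y` terminates at `0`, whose expansion is the single digit `0`.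
-/

namespace QDExpansion

variable {q d : ℤ}

def HasExpansion (q d x : ℤ) : Prop :=
  ∃ (ℓ : ℕ) (c : ℕ → ℤ),
    (∀ i ≤ ℓ, d ≤ c i ∧ c i ≤ q + d - 1) ∧ x = ∑ i ∈ Finset.range (ℓ + 1), c i * q ^ i

theorem hasExpansion_zero (hd : d ≤ 0) (hq : 1 - d ≤ q) : HasExpansion q d 0 :=
  ⟨0, fun _ => 0, fun _ _ => ⟨hd, show 0 ≤ q + d - 1 by omega⟩, by simp⟩

theorem HasExpansion.digit_add_mul {r y : ℤ} (hr : d ≤ r ∧ r ≤ q + d - 1)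
    (hy : HasExpansion q d y) : HasExpansion q d (r + q * y) := by
  obtain ⟨ℓ, c, hc, rfl⟩ := hy
  refine ⟨ℓ + 1, fun i => if i = 0 then r else c (i - 1), fun i hi => ?_, ?_⟩
  · rcases i with _ | i
    · simpa using hr
    · simpa using hc i (by omega)
  · rw [Finset.sum_range_succ' _ (ℓ + 1), Finset.mul_sum, add_comm r]
    simp [pow_succ, mul_comm, mul_left_comm]

theorem exists_digit_add_mul (hq : 0 < q) (x : ℤ) :
    ∃ r y, (d ≤ r ∧ r ≤ q + d - 1) ∧ x = r + q * y := by
  refine ⟨d + (x - d) % q, (x - d) / q, ⟨?_, ?_⟩, ?_⟩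
  · linarith [Int.emod_nonneg (x - d) hq.ne']
  · linarith [Int.emod_lt_of_pos (x - d) hq]
  · linarith [Int.emod_add_mul_ediv (x - d) q]

theorem natAbs_lt_of_eq_add_mul {x r y : ℤ} (hx : x ≠ 0) (hr : |r| ≤ q - 2)
    (h : x = r + q * y) : y.natAbs < x.natAbs := by
  have hq : 2 ≤ q := by linarith [abs_nonneg r]
  have hqy : q * |y| ≤ |x| + (q - 2) := by
    calc q * |y| = |x - r| := by
          rw [h, add_sub_cancel_left, abs_mul, abs_of_nonneg (by omega : (0 : ℤ) ≤ q)]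
      _ ≤ |x| + |r| := abs_sub _ _
      _ ≤ |x| + (q - 2) := by linarith
  have hx1 : 1 ≤ |x| := Int.one_le_abs hx
  suffices |y| < |x| by rwa [Int.abs_eq_natAbs, Int.abs_eq_natAbs, Nat.cast_lt] at this
  by_contra! hyx
  linarith [mul_le_mul_of_nonneg_left hyx (by omega : (0 : ℤ) ≤ q),
    mul_le_mul_of_nonneg_left hx1 (by omega : (0 : ℤ) ≤ q - 1)]

theorem hasExpansion (hlo : 2 - q ≤ d) (hhi : d ≤ -1) (x : ℤ) : HasExpansion q d x := by
  by_cases hx : x = 0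
  · exact hx ▸ hasExpansion_zero (by omega) (by omega)
  obtain ⟨r, y, hr, rfl⟩ := exists_digit_add_mul (q := q) (d := d) (by omega) x
  have hy : y.natAbs < (r + q * y).natAbs :=
    natAbs_lt_of_eq_add_mul hx (abs_le.mpr ⟨by omega, by omega⟩) rfl
  exact (hasExpansion hlo hhi y).digit_add_mul hr
termination_by x.natAbs

end QDExpansion

theorem qd_expansion_exists_general (q d : ℤ) (hd1 : -q < d) (hd2 : d ≤ 0)
    (hd3 : d ≠ 0) (hd4 : d ≠ -q + 1) (x : ℤ) :
    ∃ (ℓ : ℕ) (c : ℕ → ℤ),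
      (∀ i ≤ ℓ, d ≤ c i ∧ c i ≤ q + d - 1) ∧
      x = ∑ i ∈ Finset.range (ℓ + 1), c i * q ^ i :=
  QDExpansion.hasExpansion (by omega) (by omega) x

/-- Every integer has a `(q,d)`-expansion when `q ≥ 2`, `-q < d ≤ 0`,
`d ≠ 0` and `d ≠ -q+1`. -/
theorem qd_expansion_exists (q d : ℤ) (hq : 2 ≤ q) (hd1 : -q < d) (hd2 : d ≤ 0)
    (hd3 : d ≠ 0) (hd4 : d ≠ -q + 1) (x : ℤ) :
    ∃ (ℓ : ℕ) (c : ℕ → ℤ),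
      (∀ i ≤ ℓ, d ≤ c i ∧ c i ≤ q + d - 1) ∧
      x = ∑ i ∈ Finset.range (ℓ + 1), c i * q ^ i :=
  qd_expansion_exists_general q d hd1 hd2 hd3 hd4 x
end

section
/- Let (X_ℓ) be random variables with support ℕ₀ and finite support for each ℓ, and suppose P(X_ℓ ≤ k) = exp(−δℓ/a^k)(1 + o(1)) uniformly for k = log_a ℓ + O(1), where a > 1 and δ > 0. Then X_ℓ − log_a ℓ converges weakly to a double-exponential (Gumbel-type) limit along subsequences of ℓ for which the fractional part {log_a ℓ} converges; specifically, if {log_a ℓ + log_a δ} → β, then P(X_ℓ − ⌊log_a ℓ + log_a δ⌋ ≤ m) → exp(−a^{β−m}) for each integer m. -/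
open Real Filter Asymptotics

/-!
Put `x_ℓ = log_a (δℓ) = log_a ℓ + log_a δ` and `k_ℓ = ⌊x_ℓ⌋ + m`. Then
`δℓ / a^{k_ℓ} = a^{{x_ℓ} - m}`, so along `L` the model term `exp(-δℓ/a^{k_ℓ})` tends to
`exp(-a^{β - m})`. Since `k_ℓ` stays within a bounded distance of `log_a ℓ`, the uniform relative
error bound makes `P(X_ℓ ≤ k_ℓ)` asymptotically equivalent to the model term, hence it has the
same limit.
-/

lemma abs_floor_add_add_int_sub_le (y c : ℝ) (m : ℤ) :
    |((⌊y + c⌋ + m : ℤ) : ℝ) - y| ≤ |c| + |(m : ℝ)| + 1 := by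
  have h₁ := Int.floor_le (y + c)
  have h₂ := Int.lt_floor_add_one (y + c)
  push_cast
  rw [abs_le]
  constructor <;> linarith [le_abs_self c, neg_abs_le c, le_abs_self (m : ℝ), neg_abs_le (m : ℝ)]

lemma div_zpow_floor_logb_add {a y : ℝ} (ha₀ : 0 < a) (ha₁ : a ≠ 1) (hy : 0 < y) (m : ℤ) :
    y / a ^ (⌊logb a y⌋ + m) = a ^ (Int.fract (logb a y) - m) := by
  rw [← rpow_intCast, Int.fract, rpow_sub ha₀, rpow_sub ha₀, rpow_logb ha₀ ha₁ hy]
  push_cast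
  rw [rpow_add ha₀, div_div]

lemma continuous_exp_neg_rpow {a : ℝ} (ha : 0 < a) : Continuous fun y : ℝ => exp (-a ^ y) :=
  (continuous_const.rpow continuous_id fun _ => Or.inl ha.ne').neg.rexp

lemma tendsto_exp_neg_div_zpow_floor_logb_add {a δ β : ℝ} (ha : 1 < a) (hδ : 0 < δ)
    {L : ℕ → ℕ} (hL : Tendsto L atTop atTop)
    (hfrac : Tendsto (fun n => Int.fract (logb a (L n) + logb a δ)) atTop (nhds β)) (m : ℤ) :
    Tendsto (fun n => exp (-δ * L n / a ^ (⌊logb a (L n) + logb a δ⌋ + m))) atTop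
      (nhds (exp (-a ^ (β - m)))) := by
  have ha₀ : 0 < a := one_pos.trans ha
  have hlim := ((continuous_exp_neg_rpow ha₀).tendsto _).comp (hfrac.sub_const (m : ℝ))
  refine hlim.congr' ?_
  filter_upwards [hL.eventually_ge_atTop 1] with n hn
  have hL₀ : (0 : ℝ) < L n := by exact_mod_cast hn
  have hlog : logb a (L n) + logb a δ = logb a (δ * L n) := by
    rw [logb_mul hδ.ne' hL₀.ne', add_comm]
  simp only [Function.comp_apply, neg_mul, neg_div, hlog,
    div_zpow_floor_logb_add ha₀ ha.ne' (mul_pos hδ hL₀)]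

lemma isEquivalent_of_uniform_relative_error {p q : ℕ → ℤ → ℝ} {g : ℕ → ℝ} {C : ℝ}
    (hunif : ∀ ε > 0, ∃ N : ℕ, ∀ ℓ ≥ N, ∀ k : ℤ,
      |(k : ℝ) - g ℓ| ≤ C → |p ℓ k - q ℓ k| ≤ ε * q ℓ k)
    {α : Type*} {l : Filter α} {L : α → ℕ} (hL : Tendsto L l atTop) {k : α → ℤ}
    (hk : ∀ x, |(k x : ℝ) - g (L x)| ≤ C) :
    (fun x => p (L x) (k x)) ~[l] fun x => q (L x) (k x) := by
  refine IsLittleO.of_bound fun ε hε => ?_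
  obtain ⟨N, hN⟩ := hunif ε hε
  filter_upwards [hL.eventually_ge_atTop N] with x hx
  calc ‖p (L x) (k x) - q (L x) (k x)‖ ≤ ε * q (L x) (k x) := hN _ hx _ (hk x)
    _ ≤ ε * ‖q (L x) (k x)‖ := by gcongr; exact le_abs_self _

theorem double_exponential_limit_general
    (a δ : ℝ) (ha : 1 < a) (hδ : 0 < δ)
    (p : ℕ → ℤ → ℝ)
    (hunif : ∀ C > 0, ∀ ε > 0, ∃ N : ℕ, ∀ ℓ ≥ N, ∀ k : ℤ,
      |(k : ℝ) - Real.logb a ℓ| ≤ C →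
        |p ℓ k - Real.exp (-δ * ℓ / a ^ k)| ≤ ε * Real.exp (-δ * ℓ / a ^ k))
    (L : ℕ → ℕ) (hL : Tendsto L atTop atTop) (β : ℝ)
    (hfrac : Tendsto (fun n => Int.fract (Real.logb a (L n) + Real.logb a δ))
      atTop (nhds β)) :
    ∀ m : ℤ, Tendsto
      (fun n => p (L n) (⌊Real.logb a (L n) + Real.logb a δ⌋ + m))
      atTop (nhds (Real.exp (-(a ^ (β - (m : ℝ)))))) := by
  intro m
  have hequiv := isEquivalent_of_uniform_relative_error
    (hunif (|logb a δ| + |(m : ℝ)| + 1) (by positivity)) hL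
    fun n => abs_floor_add_add_int_sub_le (logb a (L n)) (logb a δ) m
  exact hequiv.symm.tendsto_nhds (tendsto_exp_neg_div_zpow_floor_logb_add ha hδ hL hfrac m)

/-- Double-exponential (Gumbel-type) limit law. If `P(X_ℓ ≤ k)` (encoded by
`p ℓ k`) satisfies `P(X_ℓ ≤ k) = exp(-δℓ/a^k)(1 + o(1))` uniformly for
`k = log_a ℓ + O(1)`, then along subsequences where the fractional part
`{log_a ℓ + log_a δ}` converges to `β`, we have
`P(X_ℓ - ⌊log_a ℓ + log_a δ⌋ ≤ m) → exp(-a^{β-m})` for each integer `m`. -/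
theorem double_exponential_limit
    (a δ : ℝ) (ha : 1 < a) (hδ : 0 < δ)
    (p : ℕ → ℤ → ℝ)
    (hcdf : ∀ ℓ : ℕ, Monotone (p ℓ))
    (hprob : ∀ ℓ : ℕ, ∀ k : ℤ, 0 ≤ p ℓ k ∧ p ℓ k ≤ 1)
    (hsupp : ∀ ℓ : ℕ, ∀ k : ℤ, k < 0 → p ℓ k = 0)
    (hfin : ∀ ℓ : ℕ, ∃ K : ℤ, ∀ k ≥ K, p ℓ k = 1)
    (hunif : ∀ C > 0, ∀ ε > 0, ∃ N : ℕ, ∀ ℓ ≥ N, ∀ k : ℤ,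
      |(k : ℝ) - Real.logb a ℓ| ≤ C →
        |p ℓ k - Real.exp (-δ * ℓ / a ^ k)| ≤ ε * Real.exp (-δ * ℓ / a ^ k))
    (L : ℕ → ℕ) (hL : Tendsto L atTop atTop) (β : ℝ)
    (hfrac : Tendsto (fun n => Int.fract (Real.logb a (L n) + Real.logb a δ))
      atTop (nhds β)) :
    ∀ m : ℤ, Tendsto
      (fun n => p (L n) (⌊Real.logb a (L n) + Real.logb a δ⌋ + m))
      atTop (nhds (Real.exp (-(a ^ (β - (m : ℝ)))))) :=
  double_exponential_limit_general a δ ha hδ p hunif L hL β hfrac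
end

section
/- Let s(z) be a real polynomial with no zeros in the closed disk |z| ≤ 1+2C for some C > 0, and suppose (1+C)/a < 1 for some a > 1. Let S_k(z) = (1−z)s(z) + E_k(z) where sup_{|z|=1+C} |E_k(z)| = O(((1+C)/a)^k). Then for all sufficiently large k, S_k has exactly one root in the disk {z : |z| ≤ 1+C}, and that root is simple. -/
/-!
Since `(1 - z) s(z) + E(z) = s(z) (1 + E(z)/s(z) - z)` and `s` has no zeros on the disk, the roots
of `S_k` there are the fixed points of `g = 1 + h` with `h = E_k / s`. By the maximum modulus
principle `|E_k|` is `O(((1 + C)/a)^k)` on the whole disk, so `h` is uniformly small there for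
large `k`; Cauchy's estimate then makes `|h'| ≤ 1/2` near `1`, so `g` is a contraction of a small
disk around `1` into itself, and every fixed point of `g` in the big disk already lies in that
small one. The fixed point is a simple root because `S_k'(z) = s(z) (h'(z) - 1) ≠ 0`.
-/

open Polynomial Metric Set Filter Topology

theorem Complex.norm_le_of_forall_mem_sphere_norm_le {F : Type*} [NormedAddCommGroup F]
    [NormedSpace ℂ F] {f : ℂ → F} {c : ℂ} {R M : ℝ} (hR : R ≠ 0)
    (hf : DiffContOnCl ℂ f (ball c R)) (hM : ∀ z ∈ sphere c R, ‖f z‖ ≤ M) {z : ℂ}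
    (hz : z ∈ closedBall c R) : ‖f z‖ ≤ M :=
  norm_le_of_forall_mem_frontier_norm_le isBounded_ball hf (by rwa [frontier_ball c hR])
    (by rwa [closure_ball c hR])

theorem Polynomial.rootMultiplicity_eq_one_of_eval_derivative_ne_zero {R : Type*} [CommRing R]
    [IsDomain R] [CharZero R] {p : R[X]} {t : R} (hroot : p.IsRoot t)
    (hderiv : p.derivative.eval t ≠ 0) : p.rootMultiplicity t = 1 := by
  have hp : p ≠ 0 := by rintro rfl; simp at hderiv
  have hpos := (rootMultiplicity_pos hp).2 hroot
  have : ¬ 1 < p.rootMultiplicity t := fun h =>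
    hderiv ((one_lt_rootMultiplicity_iff_isRoot hp).1 h).2
  omega

section SmallPerturbation

variable {h : ℂ → ℂ} {c : ℂ} {δ : ℝ}

theorem norm_deriv_le_half_of_norm_le (hd : DifferentiableOn ℂ h (closedBall c (3 * δ)))
    (hb : ∀ w ∈ closedBall c (3 * δ), ‖h w‖ ≤ δ) (hδ : 0 < δ) {x : ℂ}
    (hx : x ∈ closedBall c δ) : ‖deriv h x‖ ≤ 1 / 2 := by
  have hsub : closedBall x (2 * δ) ⊆ closedBall c (3 * δ) :=
    closedBall_subset_closedBall' (by rw [mem_closedBall] at hx; linarith)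
  calc ‖deriv h x‖ ≤ δ / (2 * δ) :=
        Complex.norm_deriv_le_of_forall_mem_sphere_norm_le (by positivity)
          (hd.mono (closure_ball_subset_closedBall.trans hsub)).diffContOnCl
          fun w hw => hb w (hsub (sphere_subset_closedBall hw))
    _ = 1 / 2 := by field_simp

theorem lipschitzOnWith_half_of_norm_le (hd : DifferentiableOn ℂ h (closedBall c (3 * δ)))
    (hb : ∀ w ∈ closedBall c (3 * δ), ‖h w‖ ≤ δ) (hδ : 0 < δ) :
    LipschitzOnWith (1 / 2) h (closedBall c δ) := by
  refine (convex_closedBall c δ).lipschitzOnWith_of_nnnorm_deriv_le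
    (fun x hx => hd.differentiableAt (closedBall_mem_nhds_of_mem ?_)) fun x hx => ?_
  · rw [mem_closedBall] at hx
    rw [mem_ball]
    linarith
  · rw [← NNReal.coe_le_coe, coe_nnnorm]
    simpa using norm_deriv_le_half_of_norm_le hd hb hδ hx

theorem exists_unique_fixedPoint_add_of_norm_le {U : Set ℂ} (hU : closedBall c (3 * δ) ⊆ U)
    (hd : DifferentiableOn ℂ h U) (hb : ∀ w ∈ U, ‖h w‖ ≤ δ) (hδ : 0 < δ) :
    ∃ z ∈ closedBall c δ, c + h z = z ∧ ‖deriv h z‖ ≤ 1 / 2 ∧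
      ∀ w ∈ U, c + h w = w → w = z := by
  have hd' := hd.mono hU
  have hb' := fun w hw => hb w (hU hw)
  have hlip := lipschitzOnWith_half_of_norm_le hd' hb' hδ
  have hmapsU : MapsTo (c + h ·) U (closedBall c δ) := fun w hw => by
    simpa [dist_eq_norm] using hb w hw
  have hmaps : MapsTo (c + h ·) (closedBall c δ) (closedBall c δ) :=
    hmapsU.mono_left ((closedBall_subset_closedBall (by linarith)).trans hU)
  have hcontr : ContractingWith (1 / 2) (hmaps.restrict _ _ _) := by
    refine ⟨by norm_num, LipschitzOnWith.mapsToRestrict hmaps ?_⟩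
    exact LipschitzOnWith.of_dist_le_mul fun x hx y hy => by
      simpa [dist_add_left] using hlip.dist_le_mul x hx y hy
  obtain ⟨z, hz, hfix, -⟩ := ContractingWith.exists_fixedPoint' isClosed_closedBall.isComplete
    hmaps hcontr (mem_closedBall_self hδ.le) (edist_ne_top _ _)
  refine ⟨z, hz, hfix, norm_deriv_le_half_of_norm_le hd' hb' hδ hz, fun w hw hfixw => ?_⟩
  have hwz : dist w z ≤ 1 / 2 * dist w z := by
    have := hlip.dist_le_mul w (hfixw ▸ hmapsU hw) z hz
    rwa [← dist_add_left c, hfix.eq, hfixw] at this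
  exact dist_le_zero.1 (by linarith [dist_nonneg (x := w) (y := z)])

end SmallPerturbation

namespace Polynomial

theorem isRoot_one_sub_X_mul_add_iff {K : Type*} [Field K] {s E : K[X]} {z : K}
    (hs : s.eval z ≠ 0) : ((1 - X) * s + E).IsRoot z ↔ 1 + E.eval z / s.eval z = z := by
  rw [IsRoot, eval_add, eval_mul, eval_sub, eval_one, eval_X]
  constructor <;> intro h <;> field_simp at h ⊢ <;> linear_combination h

theorem eval_derivative_one_sub_X_mul_add {𝕜 : Type*} [NontriviallyNormedField 𝕜]
    {s E : 𝕜[X]} {z : 𝕜} (hs : s.eval z ≠ 0) (hfix : 1 + E.eval z / s.eval z = z) :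
    ((1 - X) * s + E).derivative.eval z =
      s.eval z * (deriv (fun w => E.eval w / s.eval w) z - 1) := by
  have hquot : HasDerivAt (fun w => E.eval w / s.eval w) _ z :=
    (E.hasDerivAt z).div (s.hasDerivAt z) hs
  rw [hquot.deriv]
  simp only [derivative_add, derivative_mul, derivative_sub, derivative_one, derivative_X,
    eval_add, eval_mul, eval_sub, eval_one, eval_X, eval_zero]
  field_simp at hfix ⊢
  linear_combination eval z (derivative s) * hfix

theorem exists_unique_simple_root_one_sub_X_mul_add {s E : ℂ[X]} {C : ℝ} (hC : 0 < C)
    (hs : ∀ z : ℂ, ‖z‖ ≤ 1 + C → s.eval z ≠ 0)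
    (hE : ∀ z : ℂ, ‖z‖ ≤ 1 + C → ‖E.eval z‖ ≤ C / 3 * ‖s.eval z‖) :
    ∃ z : ℂ, ‖z‖ ≤ 1 + C ∧ ((1 - X) * s + E).IsRoot z ∧
      ((1 - X) * s + E).rootMultiplicity z = 1 ∧
      ∀ w : ℂ, ‖w‖ ≤ 1 + C → ((1 - X) * s + E).IsRoot w → w = z := by
  set h : ℂ → ℂ := fun w => E.eval w / s.eval w
  have hU : closedBall (1 : ℂ) (3 * (C / 3)) ⊆ closedBall 0 (1 + C) :=
    closedBall_subset_closedBall' (by rw [dist_zero_right, norm_one]; linarith)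
  have hd : DifferentiableOn ℂ h (closedBall 0 (1 + C)) := fun w hw =>
    (E.differentiableAt.div s.differentiableAt
      (hs w (mem_closedBall_zero_iff.1 hw))).differentiableWithinAt
  have hb : ∀ w ∈ closedBall (0 : ℂ) (1 + C), ‖h w‖ ≤ C / 3 := fun w hw => by
    rw [mem_closedBall_zero_iff] at hw
    rw [norm_div, div_le_iff₀ (norm_pos_iff.2 (hs w hw))]
    exact hE w hw
  obtain ⟨z, hz, hfix, hderiv, huniq⟩ :=
    exists_unique_fixedPoint_add_of_norm_le hU hd hb (by positivity)
  have hzU : ‖z‖ ≤ 1 + C :=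
    mem_closedBall_zero_iff.1 (hU (closedBall_subset_closedBall (by linarith) hz))
  have hsz := hs z hzU
  refine ⟨z, hzU, (isRoot_one_sub_X_mul_add_iff hsz).2 hfix, ?_, fun w hw hroot =>
    huniq w (mem_closedBall_zero_iff.2 hw) ((isRoot_one_sub_X_mul_add_iff (hs w hw)).1 hroot)⟩
  refine rootMultiplicity_eq_one_of_eval_derivative_ne_zero
    ((isRoot_one_sub_X_mul_add_iff hsz).2 hfix) ?_
  rw [eval_derivative_one_sub_X_mul_add hsz hfix]
  refine mul_ne_zero hsz (sub_ne_zero.2 fun h1 => ?_)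
  norm_num [h, h1] at hderiv

end Polynomial

/-- Rouché step: the perturbed denominator `S_k(z) = (1-z)s(z) + E_k(z)` has,
for all sufficiently large `k`, exactly one root in the disk `|z| ≤ 1 + C`,
and this root is simple. -/
theorem perturbed_denominator_unique_simple_root
    (s : Polynomial ℝ) (C a : ℝ) (hC : 0 < C) (ha : 1 < a)
    (hCa : (1 + C) / a < 1)
    (hs : ∀ z : ℂ, ‖z‖ ≤ 1 + 2 * C → (s.map (algebraMap ℝ ℂ)).eval z ≠ 0)
    (E : ℕ → Polynomial ℂ)
    (hE : ∃ D : ℝ, ∀ k : ℕ, ∀ z : ℂ, ‖z‖ = 1 + C →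
      ‖(E k).eval z‖ ≤ D * ((1 + C) / a) ^ k) :
    ∃ K : ℕ, ∀ k ≥ K,
      ∃ z : ℂ, ‖z‖ ≤ 1 + C ∧
        ((1 - X) * s.map (algebraMap ℝ ℂ) + E k).IsRoot z ∧
        ((1 - X) * s.map (algebraMap ℝ ℂ) + E k).rootMultiplicity z = 1 ∧
        ∀ w : ℂ, ‖w‖ ≤ 1 + C →
          ((1 - X) * s.map (algebraMap ℝ ℂ) + E k).IsRoot w → w = z := by
  obtain ⟨D, hD⟩ := hE
  set sc := s.map (algebraMap ℝ ℂ)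
  have hsc : ∀ z : ℂ, ‖z‖ ≤ 1 + C → sc.eval z ≠ 0 := fun z hz => hs z (by linarith)
  obtain ⟨m, hm, hsm⟩ := (isCompact_closedBall (0 : ℂ) (1 + C)).exists_forall_le'
    sc.continuous.norm.continuousOn fun z hz =>
      norm_pos_iff.2 (hsc z (mem_closedBall_zero_iff.1 hz))
  have hEk : ∀ k, ∀ z : ℂ, ‖z‖ ≤ 1 + C →
      ‖(E k).eval z‖ ≤ D * ((1 + C) / a) ^ k :=
    fun k z hz => Complex.norm_le_of_forall_mem_sphere_norm_le (by positivity)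
      (E k).differentiable.diffContOnCl (fun w hw => hD k w (mem_sphere_zero_iff_norm.1 hw))
      (mem_closedBall_zero_iff.2 hz)
  have hDk : Tendsto (fun k => D * ((1 + C) / a) ^ k) atTop (𝓝 0) := by
    simpa using (tendsto_pow_atTop_nhds_zero_of_lt_one
      (div_nonneg (by linarith) (by linarith)) hCa).const_mul D
  obtain ⟨K, hK⟩ := eventually_atTop.1 (hDk.eventually_lt_const (by positivity : 0 < C / 3 * m))
  refine ⟨K, fun k hk => exists_unique_simple_root_one_sub_X_mul_add hC hsc fun z hz => ?_⟩
  calc ‖(E k).eval z‖ ≤ D * ((1 + C) / a) ^ k := hEk k z hz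
    _ ≤ C / 3 * m := (hK k hk).le
    _ ≤ C / 3 * ‖sc.eval z‖ := by gcongr; exact hsm z (mem_closedBall_zero_iff.2 hz)
end
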